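/- arXiv:1407.1543 — 8 statements merged into one kernel-verified Lean document; each statement's English description precedes it below -/
import Mathlib

section
/- Let w_1, …, w_n be polynomials with real coefficients (in any number of variables), each of which is a sum of squares. Then the polynomial (w_1^n + w_2^n + … + w_n^n)/n − w_1·w_2⋯w_n is a sum of squares of polynomials. -/
/-!
For `a : Fin n → R` put `D(a) = ∑ aᵢⁿ - n ∏ aᵢ`; the claim is that `D(w)/n` is a sum of squares.
For `n + 1` entries one has the identity
`2n D(a) = ∑ᵢ ∑ⱼ (aᵢ - aⱼ)(aᵢⁿ - aⱼⁿ) + 2 ∑ⱼ aⱼ D(a with aⱼ removed)`,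
so `D(a)` is a sum of squares by induction on `n`: each Chebyshev term
`(x - y)(xⁿ - yⁿ) = (x - y)² ∑ xⁱ yⁿ⁻¹⁻ⁱ` is a sum of squares when `x` and `y` are, and in a
ℚ-algebra dividing a sum of squares by a positive integer `m` keeps it one, as `1/m = m (1/m)²`.
-/

open MvPolynomial

/-- A polynomial is a sum of squares if it is a finite sum of squares of polynomials. -/
def IsSOS {σ : Type*} (p : MvPolynomial σ ℝ) : Prop :=
  ∃ (r : ℕ) (q : Fin r → MvPolynomial σ ℝ), p = ∑ i, q i ^ 2

open Finset

section SumsOfSquares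

variable {R : Type*} [CommRing R]

theorem IsSumSq.pow {x : R} (hx : IsSumSq x) (k : ℕ) : IsSumSq (x ^ k) := by
  simpa using pow_mem (Subsemiring.mem_sumSq.2 hx) k

theorem IsSumSq.sub_mul_pow_sub {x y : R} (hx : IsSumSq x) (hy : IsSumSq y) (k : ℕ) :
    IsSumSq ((x - y) * (x ^ k - y ^ k)) := by
  have h : (x - y) * (x ^ k - y ^ k) = (x - y) ^ 2 * ∑ i ∈ range k, x ^ i * y ^ (k - 1 - i) := by
    rw [← geom_sum₂_mul]; ring
  rw [h]
  exact (IsSquare.sq _).isSumSq.mul (IsSumSq.sum fun i _ => (hx.pow i).mul (hy.pow _))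

theorem IsSumSq.of_natCast_mul [Algebra ℚ R] {m : ℕ} (hm : m ≠ 0) {x : R}
    (h : IsSumSq (m * x)) : IsSumSq x := by
  obtain ⟨u, hu⟩ : IsUnit (m : R) := by
    simpa using (IsUnit.mk0 (m : ℚ) (Nat.cast_ne_zero.2 hm)).map (algebraMap ℚ R)
  have hx : x = (↑u⁻¹ : R) ^ 2 * (m * (m * x)) := by
    rw [← hu, sq, mul_assoc, Units.inv_mul_cancel_left, Units.inv_mul_cancel_left]
  rw [hx]
  exact (IsSquare.sq _).isSumSq.mul ((IsSumSq.natCast m).mul h)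

end SumsOfSquares

section AMGM

variable {R : Type*} [CommRing R]

def amgmDefect {n : ℕ} (a : Fin n → R) : R :=
  ∑ i, a i ^ n - n * ∏ i, a i

theorem sum_sum_sub_mul_pow_sub {ι : Type*} [Fintype ι] (a : ι → R) (k : ℕ) :
    ∑ i, ∑ j, (a i - a j) * (a i ^ k - a j ^ k)
      = 2 * (Fintype.card ι * ∑ i, a i ^ (k + 1) - (∑ i, a i) * ∑ i, a i ^ k) := by
  have expand : ∀ i j, (a i - a j) * (a i ^ k - a j ^ k)
      = a i ^ (k + 1) - a i * a j ^ k - a j * a i ^ k + a j ^ (k + 1) := fun i j => by ring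
  simp only [expand, sum_add_distrib, sum_sub_distrib, sum_const, card_univ, ← mul_sum,
    ← sum_mul, nsmul_eq_mul]
  ring

theorem amgmDefect_succAbove_mul {n : ℕ} (a : Fin (n + 1) → R) (j : Fin (n + 1)) :
    amgmDefect (fun i => a (j.succAbove i)) * a j
      = (∑ i, a i ^ n) * a j - a j ^ (n + 1) - n * ∏ i, a i := by
  rw [amgmDefect, Fin.prod_univ_succAbove a j, Fin.sum_univ_succAbove (fun i => a i ^ n) j]
  ring

theorem sum_amgmDefect_succAbove_mul {n : ℕ} (a : Fin (n + 1) → R) :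
    ∑ j, amgmDefect (fun i => a (j.succAbove i)) * a j
      = (∑ i, a i ^ n) * ∑ i, a i - ∑ i, a i ^ (n + 1) - (n + 1) * (n * ∏ i, a i) := by
  simp only [amgmDefect_succAbove_mul, sum_sub_distrib, ← mul_sum, sum_const, card_univ,
    Fintype.card_fin, nsmul_eq_mul]
  push_cast
  ring

theorem two_mul_mul_amgmDefect {n : ℕ} (a : Fin (n + 1) → R) :
    2 * n * amgmDefect a = ∑ i, ∑ j, (a i - a j) * (a i ^ n - a j ^ n)
      + 2 * ∑ j, amgmDefect (fun i => a (j.succAbove i)) * a j := by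
  rw [sum_sum_sub_mul_pow_sub, sum_amgmDefect_succAbove_mul, amgmDefect, Fintype.card_fin]
  push_cast
  ring

theorem isSumSq_amgmDefect [Algebra ℚ R] {n : ℕ} (hn : n ≠ 0) {a : Fin n → R}
    (ha : ∀ i, IsSumSq (a i)) : IsSumSq (amgmDefect a) := by
  induction n with
  | zero => contradiction
  | succ n ih =>
    rcases eq_or_ne n 0 with rfl | hn
    · simp [amgmDefect]
    refine .of_natCast_mul (m := 2 * n) (by omega) ?_
    rw [Nat.cast_mul, Nat.cast_two, two_mul_mul_amgmDefect]
    exact (IsSumSq.sum fun i _ => IsSumSq.sum fun j _ => (ha i).sub_mul_pow_sub (ha j) n).add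
      ((IsSumSq.natCast 2).mul (IsSumSq.sum fun j _ => (ih hn fun i => ha _).mul (ha j)))

end AMGM

theorem isSOS_iff_isSumSq {σ : Type*} {p : MvPolynomial σ ℝ} : IsSOS p ↔ IsSumSq p := by
  refine ⟨?_, fun h => ?_⟩
  · rintro ⟨r, q, rfl⟩
    exact IsSumSq.sum_sq _ q
  induction h with
  | zero => exact ⟨0, finZeroElim, by simp⟩
  | @sq_add a s _ ih =>
    obtain ⟨r, q, rfl⟩ := ih
    exact ⟨r + 1, Fin.cons a q, by simp [Fin.sum_univ_succ, sq]⟩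

/-- SOS version of the AM-GM inequality: if `w 1, …, w n` are sums of squares then
`(w 1 ^ n + ⋯ + w n ^ n)/n - w 1 ⋯ w n` is a sum of squares. -/
theorem stmt0 {σ : Type*} (n : ℕ) (hn : 1 ≤ n) (w : Fin n → MvPolynomial σ ℝ)
    (hw : ∀ i, IsSOS (w i)) :
    IsSOS ((n : ℝ)⁻¹ • (∑ i, w i ^ n) - ∏ i, w i) := by
  have hn₀ : n ≠ 0 := by omega
  rw [isSOS_iff_isSumSq]
  refine .of_natCast_mul hn₀ ?_
  convert isSumSq_amgmDefect hn₀ fun i => isSOS_iff_isSumSq.1 (hw i) using 1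
  rw [amgmDefect, mul_sub, ← nsmul_eq_mul, ← Nat.cast_smul_eq_nsmul ℝ, smul_smul,
    mul_inv_cancel₀ (Nat.cast_ne_zero.2 hn₀), one_smul]
end

section
/- Let w_1, …, w_n be polynomials with real coefficients, each of which is a sum of squares. For 0 ≤ k ≤ n−1 define R_k = (1/n!)·Σ_{σ ∈ S_n} w_{σ(1)}^{n−k}·∏_{j=2}^{k+1} w_{σ(j)}, where S_n is the symmetric group on {1,…,n} (so R_0 = (w_1^n + … + w_n^n)/n and R_{n−1} = w_1 w_2 ⋯ w_n). Then for every k with 1 ≤ k ≤ n−1, the polynomial R_{k−1} − R_k is a sum of squares. -/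
open MvPolynomial

namespace SOSAux
variable {σ : Type*}

lemma zero : IsSOS (0 : MvPolynomial σ ℝ) := ⟨0, fun _ => 0, by simp⟩

lemma sq (p : MvPolynomial σ ℝ) : IsSOS (p ^ 2) := ⟨1, fun _ => p, by simp⟩

lemma one : IsSOS (1 : MvPolynomial σ ℝ) := by simpa using sq (1 : MvPolynomial σ ℝ)

lemma add {p q : MvPolynomial σ ℝ} (hp : IsSOS p) (hq : IsSOS q) : IsSOS (p + q) := by
  obtain ⟨r, a, rfl⟩ := hp
  obtain ⟨s, b, rfl⟩ := hq
  exact ⟨r + s, Fin.append a b, by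
    rw [Fin.sum_univ_add]; simp [Fin.append_left, Fin.append_right]⟩

lemma sum {ι : Type*} (s : Finset ι) (f : ι → MvPolynomial σ ℝ)
    (h : ∀ i ∈ s, IsSOS (f i)) : IsSOS (∑ i ∈ s, f i) := by
  classical
  induction s using Finset.cons_induction with
  | empty => simpa using zero
  | cons i s hi ih =>
    rw [Finset.sum_cons]
    exact add (h i (Finset.mem_cons_self _ _)) (ih fun j hj => h j (Finset.mem_cons_of_mem hj))

lemma mul {p q : MvPolynomial σ ℝ} (hp : IsSOS p) (hq : IsSOS q) : IsSOS (p * q) := by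
  obtain ⟨r, a, rfl⟩ := hp
  obtain ⟨s, b, rfl⟩ := hq
  rw [Finset.sum_mul_sum]
  refine sum _ _ fun i _ => sum _ _ fun j _ => ?_
  rw [← mul_pow]; exact sq _

lemma pow {p : MvPolynomial σ ℝ} (hp : IsSOS p) (m : ℕ) : IsSOS (p ^ m) := by
  induction m with
  | zero => simpa using one
  | succ m ih => rw [pow_succ]; exact mul ih hp

lemma prod {ι : Type*} (s : Finset ι) (f : ι → MvPolynomial σ ℝ)
    (h : ∀ i ∈ s, IsSOS (f i)) : IsSOS (∏ i ∈ s, f i) := by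
  classical
  induction s using Finset.cons_induction with
  | empty => simpa using one
  | cons i s hi ih =>
    rw [Finset.prod_cons]
    exact mul (h i (Finset.mem_cons_self _ _)) (ih fun j hj => h j (Finset.mem_cons_of_mem hj))

lemma smul {c : ℝ} (hc : 0 ≤ c) {p : MvPolynomial σ ℝ} (hp : IsSOS p) : IsSOS (c • p) := by
  obtain ⟨r, a, rfl⟩ := hp
  refine ⟨r, fun i => Real.sqrt c • a i, ?_⟩
  rw [Finset.smul_sum]
  refine Finset.sum_congr rfl fun i _ => ?_
  rw [smul_pow, Real.sq_sqrt hc]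

end SOSAux

/-- For sums of squares `w 1, …, w n`, with
`R l = (1/n!) ∑_{π ∈ S_n} w_{π(1)}^{n-l} ∏_{j=2}^{l+1} w_{π(j)}`
(indices `0`-based below: the first index is `π 0` and the product is over positions `1,…,l`),
the difference `R (k-1) - R k` is a sum of squares for every `1 ≤ k ≤ n - 1`. -/
theorem stmt2 {σ : Type*} (n : ℕ) (hn : 2 ≤ n) (w : Fin n → MvPolynomial σ ℝ)
    (hw : ∀ i, IsSOS (w i))
    (R : ℕ → MvPolynomial σ ℝ)
    (hR : ∀ l : ℕ, R l = ((n.factorial : ℝ))⁻¹ •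
      ∑ π : Equiv.Perm (Fin n),
        w (π ⟨0, by omega⟩) ^ (n - l) *
          ∏ j ∈ Finset.univ.filter (fun j : Fin n => 1 ≤ (j : ℕ) ∧ (j : ℕ) ≤ l), w (π j))
    (k : ℕ) (hk1 : 1 ≤ k) (hk2 : k ≤ n - 1) :
    IsSOS (R (k - 1) - R k) := by
  classical
  have hkn : k < n := by omega
  set z : Fin n := ⟨0, by omega⟩ with hz
  set kk : Fin n := ⟨k, hkn⟩ with hkk
  set m : ℕ := n - k with hm
  have hm1 : 1 ≤ m := by omega
  set S : Finset (Fin n) :=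
    Finset.univ.filter (fun j : Fin n => 1 ≤ (j : ℕ) ∧ (j : ℕ) ≤ k - 1) with hS
  -- the per-permutation difference
  set t : Equiv.Perm (Fin n) → MvPolynomial σ ℝ := fun π =>
    w (π z) ^ (m + 1) * ∏ j ∈ S, w (π j)
      - w (π z) ^ m * (w (π kk) * ∏ j ∈ S, w (π j)) with ht
  -- the grouped SOS term
  set g : Equiv.Perm (Fin n) → MvPolynomial σ ℝ := fun π =>
    (w (π z) - w (π kk)) ^ 2 *
      (∑ i ∈ Finset.range m, w (π z) ^ i * w (π kk) ^ (m - 1 - i)) *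
      ∏ j ∈ S, w (π j) with hg
  have hzkk : z ≠ kk := by
    simp only [hz, hkk, Ne, Fin.mk.injEq]
    omega
  set τ : Equiv.Perm (Fin n) := Equiv.swap z kk with hτ
  -- step 1: R (k-1) - R k = (n!)⁻¹ • ∑ t π
  have step1 : R (k - 1) - R k = ((n.factorial : ℝ))⁻¹ • ∑ π : Equiv.Perm (Fin n), t π := by
    rw [hR (k - 1), hR k, ← smul_sub, ← Finset.sum_sub_distrib]
    congr 1
    refine Finset.sum_congr rfl fun π _ => ?_
    have e1 : n - (k - 1) = m + 1 := by omega
    have e2 : Finset.univ.filter (fun j : Fin n => 1 ≤ (j : ℕ) ∧ (j : ℕ) ≤ k)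
        = insert kk S := by
      ext j
      simp only [Finset.mem_filter, Finset.mem_univ, true_and, Finset.mem_insert, hS, hkk]
      constructor
      · rintro ⟨h1, h2⟩
        rcases eq_or_lt_of_le h2 with h | h
        · left; exact Fin.ext h
        · right; exact ⟨h1, by omega⟩
      · rintro (rfl | ⟨h1, h2⟩)
        · exact ⟨hk1, le_rfl⟩
        · exact ⟨h1, by omega⟩
    have hkkS : kk ∉ S := by
      simp [hS, hkk]
      omega
    rw [e1, e2, Finset.prod_insert hkkS]
  -- step 2: pointwise pairing identity
  have pair : ∀ π : Equiv.Perm (Fin n), g π = t π + t (π * τ) := by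
    intro π
    have h0 : (π * τ) z = π kk := by simp [hτ, Equiv.Perm.mul_apply]
    have h1 : (π * τ) kk = π z := by simp [hτ, Equiv.Perm.mul_apply]
    have h2 : ∀ j ∈ S, (π * τ) j = π j := by
      intro j hj
      simp only [hS, Finset.mem_filter, Finset.mem_univ, true_and] at hj
      have hjz : j ≠ z := by
        simp only [hz, Ne, Fin.ext_iff]; omega
      have hjkk : j ≠ kk := by
        simp only [hkk, Ne, Fin.ext_iff]; omega
      simp [hτ, Equiv.Perm.mul_apply, Equiv.swap_apply_of_ne_of_ne hjz hjkk]
    have hP : ∏ j ∈ S, w ((π * τ) j) = ∏ j ∈ S, w (π j) :=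
      Finset.prod_congr rfl fun j hj => by rw [h2 j hj]
    set a := w (π z)
    set b := w (π kk)
    set P := ∏ j ∈ S, w (π j)
    have hG : (∑ i ∈ Finset.range m, a ^ i * b ^ (m - 1 - i)) * (a - b) = a ^ m - b ^ m :=
      geom_sum₂_mul a b m
    have : g π = (∑ i ∈ Finset.range m, a ^ i * b ^ (m - 1 - i)) * (a - b) * ((a - b) * P) := by
      simp only [hg]
      ring
    rw [this, hG]
    simp only [ht, h0, h1, hP]
    ring
  -- step 3: reindex and combine
  have step3 : ∑ π : Equiv.Perm (Fin n), t π
      = (2 : ℝ)⁻¹ • ∑ π : Equiv.Perm (Fin n), g π := by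
    have reidx : ∑ π : Equiv.Perm (Fin n), t (π * τ) = ∑ π : Equiv.Perm (Fin n), t π :=
      Equiv.sum_comp (Equiv.mulRight τ) t
    have : ∑ π : Equiv.Perm (Fin n), g π
        = (2 : ℝ) • ∑ π : Equiv.Perm (Fin n), t π := by
      rw [two_smul]
      rw [← reidx]
      conv_lhs => rw [Finset.sum_congr rfl fun π _ => pair π]
      rw [Finset.sum_add_distrib, reidx]
    rw [this, ← smul_assoc]
    norm_num
  rw [step1, step3, smul_comm]
  refine SOSAux.smul (by positivity) (SOSAux.smul (by positivity) ?_)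
  refine SOSAux.sum _ _ fun π _ => ?_
  exact SOSAux.mul (SOSAux.mul (SOSAux.sq _)
    (SOSAux.sum _ _ fun i _ => SOSAux.mul (SOSAux.pow (hw _) _) (SOSAux.pow (hw _) _)))
    (SOSAux.prod _ _ fun j _ => hw _)
end

section
/- Let d ≥ 4 be an even integer and s ≥ 1 an integer. Then in the polynomial ring ℝ[v_1, …, v_m], the polynomial (Σ_{i=1}^m v_i^{(d−2)s})·(Σ_{i=1}^m v_i²)^s − (Σ_{i=1}^m v_i^d)^s is a sum of squares. (Equivalently, with k = (d−2)s: (‖v‖_d^d)^{k/(d−2)} ⪯ ‖v‖_k^k·(‖v‖_2^2)^{k/(d−2)} as polynomials.) -/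
open MvPolynomial

/-! Write `P k = ∑ i, v i ^ k` and `d = 2p + 2`. The identity
`P (2p(s+1)) P 2 ^ (s+1) - P d ^ (s+1)
  = P 2 ^ s (P (2p + 2ps) P 2 - P (2ps) P d) + P d (P (2ps) P 2 ^ s - P d ^ s)`
drives an induction on `s`. The case `s = 1` is `∑_{i ≠ j} v i ^ 2p v j ^ 2`, and for
`2ps = 2q + 2` the middle factor symmetrizes to
`∑_{i < j} (v i v j)² (v i ^ 2p - v j ^ 2p)(v i ^ 2q - v j ^ 2q)`; with `a = v i²`, `b = v j²`,
each `(a^p - b^p)(a^q - b^q)` is `(a - b)²` times two geometric sums of squares. -/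

open Finset

section PowerSum

variable {ι R : Type*} [CommRing R]

theorem IsSumSq.pow_s4 {a : R} (ha : IsSumSq a) (n : ℕ) : IsSumSq (a ^ n) := by
  simpa using pow_mem (S := Subsemiring.sumSq R) (by simpa) n

theorem isSumSq_sub_pow_mul_sub_pow (u w : R) (p q : ℕ) :
    IsSumSq ((u ^ (2 * p) - w ^ (2 * p)) * (u ^ (2 * q) - w ^ (2 * q))) := by
  have geom (n : ℕ) : (∑ i ∈ range n, (u ^ i * w ^ (n - 1 - i)) ^ 2) * (u ^ 2 - w ^ 2)
      = u ^ (2 * n) - w ^ (2 * n) := by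
    rw [pow_mul, pow_mul, ← geom_sum₂_mul (u ^ 2) (w ^ 2) n]
    congr 1
    exact sum_congr rfl fun i _ => by ring
  rw [← geom p, ← geom q, mul_mul_mul_comm]
  exact ((IsSumSq.sum_sq _ _).mul (IsSumSq.sum_sq _ _)).mul (IsSumSq.mul_self (u ^ 2 - w ^ 2))

variable (x : ι → R)

def powerSum (s : Finset ι) (k : ℕ) : R := ∑ i ∈ s, x i ^ k

@[simp]
theorem powerSum_empty (k : ℕ) : powerSum x ∅ k = 0 := sum_empty

@[simp]
theorem powerSum_cons {a : ι} {s : Finset ι} (ha : a ∉ s) (k : ℕ) :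
    powerSum x (cons a s ha) k = x a ^ k + powerSum x s k :=
  sum_cons ha

theorem isSumSq_powerSum_of_even (s : Finset ι) {k : ℕ} (hk : Even k) :
    IsSumSq (powerSum x s k) :=
  IsSumSq.sum fun i _ => (hk.isSquare_pow (x i)).isSumSq

theorem isSumSq_powerSum_mul_powerSum_two_sub (s : Finset ι) (p : ℕ) :
    IsSumSq (powerSum x s (2 * p) * powerSum x s 2 - powerSum x s (2 * p + 2)) := by
  induction s using Finset.cons_induction with
  | empty => simp
  | cons a s ha ih =>
    have split : powerSum x (cons a s ha) (2 * p) * powerSum x (cons a s ha) 2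
          - powerSum x (cons a s ha) (2 * p + 2)
        = (powerSum x s (2 * p) * powerSum x s 2 - powerSum x s (2 * p + 2))
          + x a ^ (2 * p) * powerSum x s 2 + powerSum x s (2 * p) * x a ^ 2 := by
      simp only [powerSum_cons]
      ring
    rw [split]
    exact (ih.add (((even_two_mul p).isSquare_pow _).isSumSq.mul
      (isSumSq_powerSum_of_even x s even_two))).add
      ((isSumSq_powerSum_of_even x s (even_two_mul p)).mul (IsSquare.sq _).isSumSq)

theorem isSumSq_powerSum_mul_sub_mul (s : Finset ι) (p q : ℕ) :
    IsSumSq (powerSum x s (2 * p + 2 * q + 2) * powerSum x s 2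
      - powerSum x s (2 * q + 2) * powerSum x s (2 * p + 2)) := by
  induction s using Finset.cons_induction with
  | empty => simp
  | cons a s ha ih =>
    have cross : ∑ j ∈ s, (x a * x j) ^ 2 *
          ((x a ^ (2 * p) - x j ^ (2 * p)) * (x a ^ (2 * q) - x j ^ (2 * q)))
        = x a ^ (2 * p + 2 * q + 2) * powerSum x s 2 - x a ^ (2 * p + 2) * powerSum x s (2 * q + 2)
          - x a ^ (2 * q + 2) * powerSum x s (2 * p + 2)
          + x a ^ 2 * powerSum x s (2 * p + 2 * q + 2) := by
      simp only [powerSum, mul_sum, ← sum_sub_distrib, ← sum_add_distrib]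
      exact sum_congr rfl fun j _ => by ring
    have split : powerSum x (cons a s ha) (2 * p + 2 * q + 2) * powerSum x (cons a s ha) 2
          - powerSum x (cons a s ha) (2 * q + 2) * powerSum x (cons a s ha) (2 * p + 2)
        = (powerSum x s (2 * p + 2 * q + 2) * powerSum x s 2
          - powerSum x s (2 * q + 2) * powerSum x s (2 * p + 2))
          + ∑ j ∈ s, (x a * x j) ^ 2 *
            ((x a ^ (2 * p) - x j ^ (2 * p)) * (x a ^ (2 * q) - x j ^ (2 * q))) := by
      rw [cross]
      simp only [powerSum_cons]
      ring
    rw [split]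
    exact ih.add (IsSumSq.sum fun j _ =>
      (IsSquare.sq _).isSumSq.mul (isSumSq_sub_pow_mul_sub_pow _ _ p q))

theorem isSumSq_powerSum_mul_pow_sub_pow (s : Finset ι) {p n : ℕ} (hp : 1 ≤ p) (hn : 1 ≤ n) :
    IsSumSq (powerSum x s (2 * p * n) * powerSum x s 2 ^ n - powerSum x s (2 * p + 2) ^ n) := by
  induction n, hn using Nat.le_induction with
  | base => simpa using isSumSq_powerSum_mul_powerSum_two_sub x s p
  | succ n hn ih =>
    obtain ⟨q, hq⟩ := Nat.exists_eq_add_of_le (Nat.mul_le_mul hp hn)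
    have split : powerSum x s (2 * p * (n + 1)) * powerSum x s 2 ^ (n + 1)
          - powerSum x s (2 * p + 2) ^ (n + 1)
        = powerSum x s 2 ^ n * (powerSum x s (2 * p + 2 * q + 2) * powerSum x s 2
            - powerSum x s (2 * q + 2) * powerSum x s (2 * p + 2))
          + powerSum x s (2 * p + 2) *
            (powerSum x s (2 * p * n) * powerSum x s 2 ^ n - powerSum x s (2 * p + 2) ^ n) := by
      rw [show 2 * p * (n + 1) = 2 * p + 2 * q + 2 by linarith,
        show 2 * p * n = 2 * q + 2 by linarith]
      ring
    rw [split]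
    exact (((isSumSq_powerSum_of_even x s even_two).pow_s4 n).mul
      (isSumSq_powerSum_mul_sub_mul x s p q)).add
      ((isSumSq_powerSum_of_even x s (even_two_mul p |>.add even_two)).mul ih)

end PowerSum

theorem IsSumSq.isSOS {σ : Type*} {p : MvPolynomial σ ℝ} (hp : IsSumSq p) : IsSOS p := by
  induction hp with
  | zero => exact ⟨0, fun _ => 0, by simp⟩
  | @sq_add a s _ ih =>
    obtain ⟨r, q, rfl⟩ := ih
    refine ⟨r + 1, Fin.cons a q, ?_⟩
    rw [Fin.sum_univ_succ, Fin.cons_zero, sq]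
    simp only [Fin.cons_succ]

/-- For even `d ≥ 4` and `s ≥ 1`, in `ℝ[v₁,…,v_m]` the polynomial
`(∑ i, v i ^ ((d-2)s)) (∑ i, v i ^ 2)^s - (∑ i, v i ^ d)^s` is a sum of squares,
i.e. `(‖v‖_d^d)^{k/(d-2)} ⪯ ‖v‖_k^k (‖v‖_2^2)^{k/(d-2)}` with `k = (d-2)s`. -/
theorem stmt4 (m d s : ℕ) (hd : 4 ≤ d) (hdeven : Even d) (hs : 1 ≤ s) :
    IsSOS ((∑ i : Fin m, (X i : MvPolynomial (Fin m) ℝ) ^ ((d - 2) * s)) *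
        (∑ i : Fin m, (X i : MvPolynomial (Fin m) ℝ) ^ 2) ^ s -
      (∑ i : Fin m, (X i : MvPolynomial (Fin m) ℝ) ^ d) ^ s) := by
  obtain ⟨p, rfl⟩ : ∃ p, d = 2 * p + 2 := by
    obtain ⟨r, hr⟩ := hdeven
    exact ⟨r - 1, by omega⟩
  rw [Nat.add_sub_cancel]
  exact (isSumSq_powerSum_mul_pow_sub_pow X univ (by omega) hs).isSOS
end

section
/- Let d ≥ 8 be an even integer, and let μ be a probability measure on ℝ^m with finite moments of degree d such that E_μ x_k^d = 1 for every k ∈ {1,…,m}. Let x^α be a square monomial of degree d (all exponents α_k even, Σ_k α_k = d) that involves at least two distinct variables x_i and x_j (i.e., α_i ≥ 2 and α_j ≥ 2 for some i ≠ j). Then E_μ x^α ≤ (E_μ[|x_i|^{d/2}·|x_j|^{d/2}])^{4/d}. -/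
open MeasureTheory

/-! Since `α` has two even exponents `≥ 2` at `i ≠ j`, `x^α = |x i|^2 |x j|^2 · |x|^β` with
`|β| = d - 4`. Rewriting this as
`(|x i|^{d/2} |x j|^{d/2})^{4/d} · ∏ₖ (|x k|^d)^{β k / d}`, the weights `4/d` and `β k / d`
sum to `1`, so the generalized Hölder inequality bounds `E x^α` by
`(E |x i|^{d/2} |x j|^{d/2})^{4/d} · ∏ₖ (E |x k|^d)^{β k / d}`, and every `E |x k|^d = 1`. -/

theorem Real.pow_rpow_natCast_div {a : ℝ} (ha : 0 ≤ a) {n : ℕ} (hn : n ≠ 0) (k : ℕ) :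
    (a ^ n) ^ ((k : ℝ) / n) = a ^ k := by
  rw [← Real.rpow_natCast a n, ← Real.rpow_mul ha, mul_div_cancel₀ _ (Nat.cast_ne_zero.2 hn),
    Real.rpow_natCast]

theorem Fintype.prod_pow_piSingle {ι M : Type*} [Fintype ι] [DecidableEq ι] [CommMonoid M]
    (f : ι → M) (i : ι) (n : ℕ) : ∏ k, f k ^ Pi.single i n k = f i ^ n :=
  (Fintype.prod_eq_single i fun k hk => by simp [hk]).trans (by simp)

theorem ENNReal.ofReal_rpow_mul_prod_rpow {ι : Type*} (s : Finset ι) {u : ℝ} {v : ι → ℝ}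
    (hu : 0 ≤ u) (hv : ∀ i ∈ s, 0 ≤ v i) {q : ℝ} {p : ι → ℝ} (hq : 0 ≤ q)
    (hp : ∀ i ∈ s, 0 ≤ p i) :
    ENNReal.ofReal (u ^ q * ∏ i ∈ s, v i ^ p i) =
      ENNReal.ofReal u ^ q * ∏ i ∈ s, ENNReal.ofReal (v i) ^ p i := by
  rw [ENNReal.ofReal_mul (by positivity), ENNReal.ofReal_rpow_of_nonneg hu hq,
    ENNReal.ofReal_prod_of_nonneg fun i hi => Real.rpow_nonneg (hv i hi) _]
  congr 1
  exact Finset.prod_congr rfl fun i hi => (ENNReal.ofReal_rpow_of_nonneg (hv i hi) (hp i hi)).symm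

theorem integral_mul_prod_rpow_le {α ι : Type*} [MeasurableSpace α] {μ : Measure α}
    (s : Finset ι) {g : α → ℝ} {f : ι → α → ℝ} (hg0 : 0 ≤ g)
    (hf0 : ∀ i ∈ s, 0 ≤ f i) (hg : Integrable g μ) (hf : ∀ i ∈ s, Integrable (f i) μ)
    {q : ℝ} {p : ι → ℝ} (hpq : q + ∑ i ∈ s, p i = 1) (hq : 0 ≤ q) (hp : ∀ i ∈ s, 0 ≤ p i) :
    ∫ a, g a ^ q * ∏ i ∈ s, f i a ^ p i ∂μ ≤ (∫ a, g a ∂μ) ^ q * ∏ i ∈ s, (∫ a, f i a ∂μ) ^ p i := by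
  have hlint : ∀ h : α → ℝ, 0 ≤ h → Integrable h μ →
      ∫⁻ a, ENNReal.ofReal (h a) ∂μ = ENNReal.ofReal (∫ a, h a ∂μ) := fun h h0 hh =>
    (ofReal_integral_eq_lintegral_ofReal hh (ae_of_all _ h0)).symm
  have hmeas : AEStronglyMeasurable (fun a => g a ^ q * ∏ i ∈ s, f i a ^ p i) μ :=
    ((hg.aemeasurable.pow_const q).mul <| Finset.aemeasurable_fun_prod s fun i hi =>
      (hf i hi).aemeasurable.pow_const _).aestronglyMeasurable
  rw [integral_eq_lintegral_of_nonneg_ae (ae_of_all _ fun a => mul_nonneg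
    (Real.rpow_nonneg (hg0 a) _) (Finset.prod_nonneg fun i hi => Real.rpow_nonneg (hf0 i hi a) _))
    hmeas]
  refine ENNReal.toReal_le_of_le_ofReal (mul_nonneg (Real.rpow_nonneg (integral_nonneg hg0) _)
    (Finset.prod_nonneg fun i hi => Real.rpow_nonneg (integral_nonneg (hf0 i hi)) _)) ?_
  calc ∫⁻ a, ENNReal.ofReal (g a ^ q * ∏ i ∈ s, f i a ^ p i) ∂μ
      = ∫⁻ a, ENNReal.ofReal (g a) ^ q * ∏ i ∈ s, ENNReal.ofReal (f i a) ^ p i ∂μ :=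
        lintegral_congr fun a =>
          ENNReal.ofReal_rpow_mul_prod_rpow s (hg0 a) (fun i hi => hf0 i hi a) hq hp
    _ ≤ (∫⁻ a, ENNReal.ofReal (g a) ∂μ) ^ q * ∏ i ∈ s, (∫⁻ a, ENNReal.ofReal (f i a) ∂μ) ^ p i :=
        ENNReal.lintegral_mul_prod_norm_pow_le s hg.aemeasurable.ennreal_ofReal
          (fun i hi => (hf i hi).aemeasurable.ennreal_ofReal) q hpq hq hp
    _ = ENNReal.ofReal ((∫ a, g a ∂μ) ^ q * ∏ i ∈ s, (∫ a, f i a ∂μ) ^ p i) := by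
        rw [ENNReal.ofReal_rpow_mul_prod_rpow s (integral_nonneg hg0)
          (fun i hi => integral_nonneg (hf0 i hi)) hq hp, hlint g hg0 hg]
        exact congrArg _ (Finset.prod_congr rfl fun i hi => by rw [hlint _ (hf0 i hi) (hf i hi)])

theorem Pi.exists_eq_add_single_add_single {ι : Type*} [DecidableEq ι] {α : ι → ℕ}
    {i j : ι} (hij : i ≠ j) {a b : ℕ} (ha : a ≤ α i) (hb : b ≤ α j) :
    ∃ β : ι → ℕ, α = β + Pi.single i a + Pi.single j b := by
  refine ⟨α - Pi.single i a - Pi.single j b, funext fun k => ?_⟩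
  by_cases hki : k = i
  · subst hki; simp [hij]; omega
  · by_cases hkj : k = j
    · subst hkj; simp [hki]; omega
    · simp [hki, hkj]

theorem prod_abs_pow_eq_rpow_mul_prod_rpow {ι : Type*} [Fintype ι] [DecidableEq ι] (x : ι → ℝ)
    (β : ι → ℕ) (i j : ι) {d : ℕ} (hd : Even d) (hd0 : d ≠ 0) :
    ∏ k, |x k| ^ (β + Pi.single i 2 + Pi.single j 2 : ι → ℕ) k =
      (|x i| ^ (d / 2) * |x j| ^ (d / 2)) ^ ((4 : ℝ) / d) * ∏ k, (|x k| ^ d) ^ ((β k : ℝ) / d) := by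
  have hd2 := Nat.two_mul_div_two_of_even hd
  have h4 : (4 : ℝ) / d = ((2 : ℕ) : ℝ) / ((d / 2 : ℕ) : ℝ) := by
    rw [div_eq_div_iff (by positivity) (by norm_cast; omega)]
    norm_cast
    omega
  rw [Real.mul_rpow (by positivity) (by positivity), h4,
    Real.pow_rpow_natCast_div (abs_nonneg _) (by omega),
    Real.pow_rpow_natCast_div (abs_nonneg _) (by omega),
    Fintype.prod_congr _ _ fun k => Real.pow_rpow_natCast_div (abs_nonneg (x k)) hd0 (β k)]
  simp only [Pi.add_apply, pow_add, Finset.prod_mul_distrib, Fintype.prod_pow_piSingle]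
  ring

theorem stmt7_general (m d : ℕ) (μ : Measure (Fin m → ℝ))
    (hint : ∀ α : Fin m → ℕ, (∑ k, α k) ≤ d →
      Integrable (fun x => ∏ k, |x k| ^ α k) μ)
    (hmom : ∀ k, ∫ x, x k ^ d ∂μ = 1)
    (α : Fin m → ℕ) (hdeg : ∑ k, α k = d) (hsq : ∀ k, Even (α k))
    (i j : Fin m) (hij : i ≠ j) (hi : 2 ≤ α i) (hj : 2 ≤ α j) :
    (∫ x, ∏ k, x k ^ α k ∂μ) ≤
      (∫ x, |x i| ^ (d / 2) * |x j| ^ (d / 2) ∂μ) ^ ((4 : ℝ) / (d : ℝ)) := by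
  have hd : Even d := hdeg ▸ Finset.even_sum _ fun k _ => hsq k
  obtain ⟨β, rfl⟩ := Pi.exists_eq_add_single_add_single hij hi hj
  have hsum : ∑ k, β k + 4 = d := by
    simpa [Finset.sum_add_distrib] using hdeg
  have hd0 : d ≠ 0 := by omega
  have hmom_abs : ∀ k, ∫ x, |x k| ^ d ∂μ = 1 := fun k => by simp_rw [hd.pow_abs]; exact hmom k
  have hint_abs : ∀ k, Integrable (fun x => |x k| ^ d) μ := fun k => by
    simpa [Fintype.prod_pow_piSingle] using hint (Pi.single k d) (by simp)
  have hint_ij : Integrable (fun x => |x i| ^ (d / 2) * |x j| ^ (d / 2)) μ := by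
    refine (hint (Pi.single i (d / 2) + Pi.single j (d / 2))
      (by simp [Finset.sum_add_distrib]; omega)).congr (ae_of_all _ fun x => ?_)
    simp only [Pi.add_apply, pow_add, Finset.prod_mul_distrib, Fintype.prod_pow_piSingle]
  have hweights : (4 : ℝ) / d + ∑ k, (β k : ℝ) / d = 1 := by
    rw [← Finset.sum_div, ← add_div, div_eq_one_iff_eq (by exact_mod_cast hd0)]
    exact_mod_cast by omega
  calc ∫ x, ∏ k, x k ^ (β + Pi.single i 2 + Pi.single j 2 : Fin m → ℕ) k ∂μ
      = ∫ x, (|x i| ^ (d / 2) * |x j| ^ (d / 2)) ^ ((4 : ℝ) / d) *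
          ∏ k, (|x k| ^ d) ^ ((β k : ℝ) / d) ∂μ := by
        refine integral_congr_ae (ae_of_all _ fun x => ?_)
        dsimp only
        rw [← prod_abs_pow_eq_rpow_mul_prod_rpow x β i j hd hd0]
        exact Fintype.prod_congr _ _ fun k => ((hsq k).pow_abs _).symm
    _ ≤ (∫ x, |x i| ^ (d / 2) * |x j| ^ (d / 2) ∂μ) ^ ((4 : ℝ) / d) *
          ∏ k, (∫ x, |x k| ^ d ∂μ) ^ ((β k : ℝ) / d) :=
        integral_mul_prod_rpow_le _ (fun x => by positivity) (fun k _ x => by positivity) hint_ij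
          (fun k _ => hint_abs k) hweights (by positivity) (fun k _ => by positivity)
    _ = (∫ x, |x i| ^ (d / 2) * |x j| ^ (d / 2) ∂μ) ^ ((4 : ℝ) / d) := by simp [hmom_abs]

/-- Let `d ≥ 8` be even and `μ` a probability measure on `ℝ^m` with finite moments of
degree `d` and `E x_k^d = 1` for all `k`. If `x^α` is a square monomial of degree `d`
involving two distinct variables `x i` and `x j`, then
`E x^α ≤ (E |x i|^{d/2} |x j|^{d/2})^{4/d}`. -/
theorem stmt7 (m d : ℕ) (hde : Even d) (hd8 : 8 ≤ d)
    (μ : Measure (Fin m → ℝ)) [IsProbabilityMeasure μ]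
    (hint : ∀ α : Fin m → ℕ, (∑ k, α k) ≤ d →
      Integrable (fun x => ∏ k, |x k| ^ α k) μ)
    (hintm : ∀ α : Fin m → ℕ, (∑ k, α k) ≤ d →
      Integrable (fun x => ∏ k, x k ^ α k) μ)
    (hmom : ∀ k, ∫ x, x k ^ d ∂μ = 1)
    (α : Fin m → ℕ) (hdeg : ∑ k, α k = d) (hsq : ∀ k, Even (α k))
    (i j : Fin m) (hij : i ≠ j) (hi : 2 ≤ α i) (hj : 2 ≤ α j) :
    (∫ x, ∏ k, x k ^ α k ∂μ) ≤
      (∫ x, |x i| ^ (d / 2) * |x j| ^ (d / 2) ∂μ) ^ ((4 : ℝ) / (d : ℝ)) :=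
  stmt7_general m d μ hint hmom α hdeg hsq i j hij hi hj
end

section
/- Let L be a degree-2 pseudoexpectation on ℝ[u₁,…,u_n]. Then the matrix M ∈ ℝ^{n×n} with entries M_{ij} = L(u_i u_j) − L(u_i)·L(u_j) is positive semidefinite, and there exists a Gaussian probability measure μ on ℝⁿ (with mean vector (L(u_1),…,L(u_n)) and covariance matrix M) such that ∫ Q dμ = L(Q) for every polynomial Q of degree at most 2. -/
open MvPolynomial MeasureTheory ProbabilityTheory

/-- A degree-`k` pseudoexpectation on `ℝ[u₁,…,u_n]`: a linear functional with `L 1 = 1`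
and `L (P²) ≥ 0` whenever `deg (P²) ≤ k`. -/
def IsPseudoExpectation (n k : ℕ) (L : MvPolynomial (Fin n) ℝ → ℝ) : Prop :=
  (∀ P Q : MvPolynomial (Fin n) ℝ, L (P + Q) = L P + L Q) ∧
  (∀ (c : ℝ) (P : MvPolynomial (Fin n) ℝ), L (c • P) = c * L P) ∧
  L 1 = 1 ∧
  ∀ P : MvPolynomial (Fin n) ℝ, (P ^ 2).totalDegree ≤ k → 0 ≤ L (P ^ 2)

/-!
Centering the variables, `L ((∑ᵢ xᵢ (uᵢ - L uᵢ))²) = xᵀ M x`, so positivity of `L` on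
squares of affine polynomials is exactly positive semidefiniteness of `M`. Writing
`M = V Vᵀ`, the law of `m + V Z`, with `m = (L uᵢ)ᵢ` and `Z` a standard Gaussian vector, has
mean `m` and covariance `M`, so its moments of order at most two are those prescribed by `L`.
A polynomial of degree at most two is a linear combination of `1`, the `uᵢ` and the `uᵢ uⱼ`,
hence its integral is its value under `L`.
-/

namespace Finsupp

variable {σ : Type*}

lemma exists_eq_single_one_add_of_ne_zero {d : σ →₀ ℕ} (hd : d ≠ 0) :
    ∃ i e, d = single i 1 + e := by
  obtain ⟨i, hi⟩ := Finsupp.ne_iff.mp hd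
  refine ⟨i, d - single i 1, (add_tsub_cancel_of_le ?_).symm⟩
  exact Finsupp.single_le_iff.mpr (Nat.one_le_iff_ne_zero.mpr hi)

lemma eq_zero_or_single_or_single_add_single_of_degree_le_two {d : σ →₀ ℕ}
    (hd : d.degree ≤ 2) :
    d = 0 ∨ (∃ i, d = single i 1) ∨ ∃ i j, d = single i 1 + single j 1 := by
  rcases eq_or_ne d 0 with rfl | h₀
  · exact .inl rfl
  obtain ⟨i, e, rfl⟩ := exists_eq_single_one_add_of_ne_zero h₀
  rcases eq_or_ne e 0 with rfl | h₁
  · exact .inr (.inl ⟨i, add_zero _⟩)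
  obtain ⟨j, f, rfl⟩ := exists_eq_single_one_add_of_ne_zero h₁
  have : f.degree = 0 := by simp only [map_add, degree_single] at hd; omega
  rw [degree_eq_zero_iff] at this
  exact .inr (.inr ⟨i, j, by rw [this, add_zero]⟩)

end Finsupp

lemma MvPolynomial.mem_span_monomial_one_of_totalDegree_le {σ R : Type*} [CommSemiring R]
    {m : ℕ} {Q : MvPolynomial σ R} (hQ : Q.totalDegree ≤ m) :
    Q ∈ Submodule.span R ((monomial · 1) '' {d : σ →₀ ℕ | d.degree ≤ m}) := by
  rwa [← mem_restrictTotalDegree, restrictTotalDegree, restrictSupport_eq_span] at hQ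

open Matrix in
lemma Matrix.PosSemidef.exists_mul_transpose_eq {ι : Type*} [Fintype ι] {M : Matrix ι ι ℝ}
    (hM : M.PosSemidef) : ∃ V : Matrix ι ι ℝ, V * Vᵀ = M := by
  classical
  open scoped MatrixOrder in
  obtain ⟨B, rfl⟩ := CStarAlgebra.nonneg_iff_eq_star_mul_self.mp hM.nonneg
  refine ⟨Bᵀ, ?_⟩
  rw [transpose_transpose, star_eq_conjTranspose, conjTranspose_eq_transpose_of_trivial]

noncomputable def pseudoCovariance {n : ℕ} (L : MvPolynomial (Fin n) ℝ → ℝ) :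
    Matrix (Fin n) (Fin n) ℝ :=
  Matrix.of fun i j => L (X i * X j) - L (X i) * L (X j)

namespace IsPseudoExpectation

variable {n k : ℕ} {L : MvPolynomial (Fin n) ℝ → ℝ}

def toLinearMap (hL : IsPseudoExpectation n k L) : MvPolynomial (Fin n) ℝ →ₗ[ℝ] ℝ where
  toFun := L
  map_add' := hL.1
  map_smul' := hL.2.1

@[simp]
lemma toLinearMap_apply (hL : IsPseudoExpectation n k L) (P : MvPolynomial (Fin n) ℝ) :
    hL.toLinearMap P = L P :=
  rfl

lemma apply_C (hL : IsPseudoExpectation n k L) (c : ℝ) : L (C c) = c := by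
  rw [← mul_one c, map_mul, map_one, ← smul_eq_C_mul, hL.2.1, hL.2.2.1]

lemma apply_sub_C_mul_sub_C (hL : IsPseudoExpectation n k L) (i j : Fin n) :
    L ((X i - C (L (X i))) * (X j - C (L (X j)))) = L (X i * X j) - L (X i) * L (X j) := by
  have h : (X i - C (L (X i))) * (X j - C (L (X j))) =
      X i * X j - L (X j) • X i - L (X i) • X j + C (L (X i) * L (X j)) := by
    simp only [smul_eq_C_mul, map_mul]
    ring
  rw [h, ← hL.toLinearMap_apply]
  simp only [map_add, map_sub, map_smul, toLinearMap_apply, smul_eq_mul, hL.apply_C]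
  ring

theorem posSemidef_pseudoCovariance (hL : IsPseudoExpectation n 2 L) :
    (pseudoCovariance L).PosSemidef := by
  refine .of_dotProduct_mulVec_nonneg ?_ fun x => ?_
  · ext i j
    simp [pseudoCovariance, mul_comm]
  set Y : Fin n → MvPolynomial (Fin n) ℝ := fun i => X i - C (L (X i))
  set P := ∑ i, x i • Y i
  have hP : P.totalDegree ≤ 1 :=
    (totalDegree_finsetSum _ _).trans <| Finset.sup_le fun i _ =>
      (totalDegree_smul_le _ _).trans <| (totalDegree_sub_C_le _ _).trans (totalDegree_X i).le
  have hP2 : P ^ 2 = ∑ i, ∑ j, (x i * x j) • (Y i * Y j) := by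
    simp only [sq, P, Finset.sum_mul_sum, smul_mul_smul_comm]
  have := hL.2.2.2 P ((totalDegree_pow P 2).trans (by omega))
  rw [hP2, ← hL.toLinearMap_apply] at this
  simpa [Y, hL.apply_sub_C_mul_sub_C, pseudoCovariance, Matrix.mulVec, dotProduct, Finset.mul_sum,
    mul_comm, mul_left_comm, mul_assoc] using this

end IsPseudoExpectation

open Matrix in
lemma Matrix.measurable_const_add_mulVec {ι κ : Type*} [Fintype ι] (m : κ → ℝ)
    (V : Matrix κ ι ℝ) :
    Measurable fun z : ι → ℝ => m + V *ᵥ z :=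
  measurable_pi_lambda _ fun i => by
    simp only [Pi.add_apply, mulVec, dotProduct]
    fun_prop

structure IsIsotropic {ι : Type*} (P : Measure (ι → ℝ)) : Prop where
  memLp : ∀ k, MemLp (fun z => z k) 2 P
  integral_eq_zero : ∀ k, ∫ z, z k ∂P = 0
  covariance_self_eq_one : ∀ k, cov[fun z => z k, fun z => z k; P] = 1
  covariance_eq_zero : ∀ k l, k ≠ l → cov[fun z => z k, fun z => z l; P] = 0

theorem isIsotropic_pi_gaussianReal {ι : Type*} [Fintype ι] :
    IsIsotropic (Measure.pi fun _ : ι => gaussianReal 0 1) where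
  memLp k := (memLp_id_gaussianReal 2).comp_measurePreserving (measurePreserving_eval _ k)
  integral_eq_zero k := by
    have h := integral_map (μ := Measure.pi fun _ : ι => gaussianReal 0 1)
      (f := fun x : ℝ => x) (measurable_pi_apply k).aemeasurable aestronglyMeasurable_id
    rw [(measurePreserving_eval _ k).map_eq, integral_id_gaussianReal] at h
    exact h.symm
  covariance_self_eq_one k := by
    have h := covariance_map (μ := Measure.pi fun _ : ι => gaussianReal 0 1) (X := id) (Y := id)
      aestronglyMeasurable_id aestronglyMeasurable_id (measurable_pi_apply k).aemeasurable
    rw [(measurePreserving_eval _ k).map_eq, covariance_self aemeasurable_id,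
      variance_id_gaussianReal] at h
    exact_mod_cast h.symm
  covariance_eq_zero k l hkl :=
    ((iIndepFun_pi (X := fun _ => id) fun _ => aemeasurable_id).indepFun hkl).covariance_eq_zero
      ((memLp_id_gaussianReal 2).comp_measurePreserving (measurePreserving_eval _ k))
      ((memLp_id_gaussianReal 2).comp_measurePreserving (measurePreserving_eval _ l))

namespace IsIsotropic

open Matrix

variable {ι κ : Type*} [Fintype ι] {P : Measure (ι → ℝ)}

lemma memLp_mulVec_apply (hP : IsIsotropic P) (V : Matrix κ ι ℝ) (i : κ) :
    MemLp (fun z => (V *ᵥ z) i) 2 P :=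
  memLp_finsetSum _ fun k _ => (hP.memLp k).const_mul (V i k)

variable [IsProbabilityMeasure P]

lemma integral_mulVec_apply (hP : IsIsotropic P) (V : Matrix κ ι ℝ) (i : κ) :
    ∫ z, (V *ᵥ z) i ∂P = 0 := by
  simp only [mulVec, dotProduct]
  rw [integral_finsetSum _ fun k _ => ((hP.memLp k).integrable one_le_two).const_mul (V i k)]
  simp [integral_const_mul, hP.integral_eq_zero]

lemma covariance_mulVec_apply (hP : IsIsotropic P) (V : Matrix κ ι ℝ) (i j : κ) :
    cov[fun z => (V *ᵥ z) i, fun z => (V *ᵥ z) j; P] = (V * Vᵀ) i j := by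
  classical
  simp only [mulVec, dotProduct]
  rw [covariance_fun_sum_fun_sum (fun k => (hP.memLp k).const_mul (V i k))
    (fun l => (hP.memLp l).const_mul (V j l))]
  have hcov (k l : ι) : cov[fun z => z k, fun z => z l; P] = if k = l then 1 else 0 := by
    split_ifs with hkl
    · subst hkl; exact hP.covariance_self_eq_one k
    · exact hP.covariance_eq_zero k l hkl
  simp [covariance_const_mul_left, covariance_const_mul_right, hcov, mul_apply, mul_comm]

lemma memLp_map_affine (hP : IsIsotropic P) (m : κ → ℝ) (V : Matrix κ ι ℝ) (i : κ) :
    MemLp (fun x => x i) 2 (P.map fun z => m + V *ᵥ z) := by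
  rw [memLp_map_measure_iff (measurable_pi_apply i).aestronglyMeasurable
    (measurable_const_add_mulVec m V).aemeasurable]
  exact (memLp_const (m i)).add (hP.memLp_mulVec_apply V i)

lemma integral_map_affine (hP : IsIsotropic P) (m : κ → ℝ) (V : Matrix κ ι ℝ) (i : κ) :
    ∫ x, x i ∂(P.map fun z => m + V *ᵥ z) = m i := by
  rw [integral_map (measurable_const_add_mulVec m V).aemeasurable
    (measurable_pi_apply i).aestronglyMeasurable]
  simp only [Pi.add_apply]
  rw [integral_add (integrable_const _) ((hP.memLp_mulVec_apply V i).integrable one_le_two),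
    hP.integral_mulVec_apply]
  simp

lemma integral_mul_map_affine (hP : IsIsotropic P) (m : κ → ℝ) (V : Matrix κ ι ℝ)
    (i j : κ) :
    ∫ x, x i * x j ∂(P.map fun z => m + V *ᵥ z) = m i * m j + (V * Vᵀ) i j := by
  have hmeas := (measurable_const_add_mulVec m V).aemeasurable (μ := P)
  have := Measure.isProbabilityMeasure_map hmeas
  have hcov := covariance_eq_sub (hP.memLp_map_affine m V i) (hP.memLp_map_affine m V j)
  rw [covariance_map_fun (measurable_pi_apply i).aestronglyMeasurable
      (measurable_pi_apply j).aestronglyMeasurable hmeas] at hcov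
  simp only [Pi.add_apply] at hcov
  rw [covariance_const_add_left ((hP.memLp_mulVec_apply V i).integrable one_le_two),
    covariance_const_add_right ((hP.memLp_mulVec_apply V j).integrable one_le_two),
    hP.covariance_mulVec_apply, hP.integral_map_affine, hP.integral_map_affine] at hcov
  simp only [Pi.mul_apply] at hcov
  linarith

end IsIsotropic

theorem integral_eval_eq_of_totalDegree_le_two {σ : Type*}
    {μ : Measure (σ → ℝ)} [IsProbabilityMeasure μ] (ℓ : MvPolynomial σ ℝ →ₗ[ℝ] ℝ)
    (hmem : ∀ i, MemLp (fun x => x i) 2 μ) (h1 : ℓ 1 = 1)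
    (hX : ∀ i, ℓ (X i) = ∫ x, x i ∂μ) (hXX : ∀ i j, ℓ (X i * X j) = ∫ x, x i * x j ∂μ)
    {Q : MvPolynomial σ ℝ} (hQ : Q.totalDegree ≤ 2) :
    ∫ x, eval x Q ∂μ = ℓ Q := by
  -- integrability is carried through the induction, as `∫` is additive only on integrable functions
  suffices Integrable (fun x => eval x Q) μ ∧ ∫ x, eval x Q ∂μ = ℓ Q from this.2
  have hspan := mem_span_monomial_one_of_totalDegree_le hQ
  clear hQ
  induction hspan using Submodule.span_induction with
  | mem _ h =>
    obtain ⟨d, hd, rfl⟩ := h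
    rcases Finsupp.eq_zero_or_single_or_single_add_single_of_degree_le_two hd with
      rfl | ⟨i, rfl⟩ | ⟨i, j, rfl⟩
    · simp [h1]
    · have hXi : monomial (Finsupp.single i 1) (1 : ℝ) = X i := rfl
      simp only [hXi, eval_X, hX, and_true]
      exact (hmem i).integrable one_le_two
    · have hXij : monomial (Finsupp.single i 1 + Finsupp.single j 1) (1 : ℝ) = X i * X j := by
        simp [X, monomial_mul]
      simp only [hXij, eval_mul, eval_X, hXX, and_true]
      exact (hmem i).integrable_mul (hmem j)
  | zero => simp
  | add P R _ _ hP hR =>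
    simp only [map_add]
    exact ⟨hP.1.add hR.1, by rw [integral_add hP.1 hR.1, hP.2, hR.2]⟩
  | smul c P _ hP =>
    simp only [smul_eval, map_smul, smul_eq_mul]
    exact ⟨hP.1.const_mul c, by rw [integral_const_mul, hP.2]⟩

/-- For a degree-2 pseudoexpectation `L`, the matrix `M i j = L(uᵢuⱼ) - L(uᵢ)L(uⱼ)` is
positive semidefinite, and there is a Gaussian probability measure on `ℝⁿ` with mean
`(L(u₁),…,L(u_n))` and covariance `M` (realized as an affine pushforward of a standard
Gaussian) whose expectation agrees with `L` on all polynomials of degree at most 2. -/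
theorem stmt8 (n : ℕ) (L : MvPolynomial (Fin n) ℝ → ℝ)
    (hL : IsPseudoExpectation n 2 L) :
    (Matrix.of fun i j : Fin n => L (X i * X j) - L (X i) * L (X j)).PosSemidef ∧
    ∃ (μ : Measure (Fin n → ℝ)) (V : Matrix (Fin n) (Fin n) ℝ),
      IsProbabilityMeasure μ ∧
      V * V.transpose = Matrix.of (fun i j : Fin n => L (X i * X j) - L (X i) * L (X j)) ∧
      μ = Measure.map (fun z i => L (X i) + ∑ j, V i j * z j)
            (Measure.pi fun _ : Fin n => gaussianReal 0 1) ∧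
      ∀ Q : MvPolynomial (Fin n) ℝ, Q.totalDegree ≤ 2 →
        ∫ x, MvPolynomial.eval x Q ∂μ = L Q := by
  set m : Fin n → ℝ := fun i => L (X i)
  have hM := hL.posSemidef_pseudoCovariance
  obtain ⟨V, hV⟩ := hM.exists_mul_transpose_eq
  have hγ := isIsotropic_pi_gaussianReal (ι := Fin n)
  have hμ := Measure.isProbabilityMeasure_map (μ := Measure.pi fun _ : Fin n => gaussianReal 0 1)
    (Matrix.measurable_const_add_mulVec m V).aemeasurable
  refine ⟨hM, _, V, hμ, hV, rfl, fun Q hQ => ?_⟩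
  refine integral_eval_eq_of_totalDegree_le_two hL.toLinearMap (hγ.memLp_map_affine m V)
    hL.2.2.1 (fun i => (hγ.integral_map_affine m V i).symm) (fun i j => ?_) hQ
  rw [hγ.integral_mul_map_affine, hV]
  simp [m, pseudoCovariance]
end

section
/- Let L be a degree-k pseudoexpectation on ℝ[u₁,…,u_n], and let W be a sum-of-squares polynomial of degree d < k with L(W) > 0. Then the linear functional L' defined on polynomials P of degree at most k − d by L'(P) = L(W·P)/L(W) is a degree-(k−d) pseudoexpectation on ℝ[u₁,…,u_n]. -/
/-!
Write `W = ∑ qᵢ²`. Then `W · P² = ∑ (qᵢ P)²`, so `L (W · P²) ≥ 0` as soon as every `(qᵢ P)²` has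
degree at most `k`, i.e. as soon as `deg qᵢ² ≤ deg W`. Over an ordered ring the leading
coefficients of the squares `qᵢ²` (for any monomial order) are nonnegative, so no cancellation
can happen at the top of `∑ qᵢ²`; with the degree-lexicographic order this gives the degree bound.
-/

open MvPolynomial

namespace MonomialOrder

variable {σ R : Type*} [CommRing R] [LinearOrder R] [IsStrictOrderedRing R] (m : MonomialOrder σ)
  {f g : MvPolynomial σ R}

theorem degree_le_degree_add_and_leadingCoeff_add_nonneg (hf : 0 ≤ m.leadingCoeff f)
    (hg : 0 ≤ m.leadingCoeff g) :
    m.degree f ≼[m] m.degree (f + g) ∧ 0 ≤ m.leadingCoeff (f + g) := by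
  rcases lt_trichotomy (m.toSyn (m.degree f)) (m.toSyn (m.degree g)) with h | h | h
  · rw [m.degree_add_eq_right_of_lt h, leadingCoeff, m.degree_add_eq_right_of_lt h, coeff_add,
      m.coeff_eq_zero_of_lt h, zero_add]
    exact ⟨h.le, hg⟩
  · have hfg : m.degree g = m.degree f := (m.toSyn.injective h).symm
    by_cases hsum : m.leadingCoeff f + m.leadingCoeff g = 0
    · rw [m.leadingCoeff_eq_zero_iff.mp ((add_eq_zero_iff_of_nonneg hf hg).mp hsum).1, zero_add]
      simpa using hg
    have hcoeff : (f + g).coeff (m.degree f) = m.leadingCoeff f + m.leadingCoeff g := by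
      rw [coeff_add, leadingCoeff, leadingCoeff, hfg]
    have hle : m.degree f ≼[m] m.degree (f + g) := m.le_degree (mem_support_iff.mpr (hcoeff ▸ hsum))
    have hdeg : m.degree (f + g) = m.degree f := by
      refine m.toSyn.injective (le_antisymm ?_ hle)
      exact m.degree_add_le.trans (by rw [hfg, max_self])
    refine ⟨hle, ?_⟩
    rw [leadingCoeff, hdeg, hcoeff]
    exact add_nonneg hf hg
  · rw [m.degree_add_of_lt h, m.leadingCoeff_add_of_lt h]
    exact ⟨le_rfl, hf⟩

theorem leadingCoeff_sq_nonneg (f : MvPolynomial σ R) : 0 ≤ m.leadingCoeff (f ^ 2) := by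
  rw [m.leadingCoeff_pow]
  exact sq_nonneg _

theorem leadingCoeff_sum_sq_nonneg {ι : Type*} (s : Finset ι) (q : ι → MvPolynomial σ R) :
    0 ≤ m.leadingCoeff (∑ j ∈ s, q j ^ 2) :=
  Finset.sum_induction _ (fun p => 0 ≤ m.leadingCoeff p)
    (fun _ _ hf hg => (m.degree_le_degree_add_and_leadingCoeff_add_nonneg hf hg).2)
    (by rw [leadingCoeff_zero]) (fun j _ => m.leadingCoeff_sq_nonneg (q j))

theorem degree_sq_le_degree_sum_sq {ι : Type*} [DecidableEq ι] {s : Finset ι}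
    (q : ι → MvPolynomial σ R) {i : ι} (hi : i ∈ s) :
    m.degree (q i ^ 2) ≼[m] m.degree (∑ j ∈ s, q j ^ 2) := by
  rw [← Finset.add_sum_erase s _ hi]
  exact (m.degree_le_degree_add_and_leadingCoeff_add_nonneg (m.leadingCoeff_sq_nonneg _)
    (m.leadingCoeff_sum_sq_nonneg _ q)).1

end MonomialOrder

theorem MvPolynomial.totalDegree_sq_le_totalDegree_sum_sq {σ R : Type*} [LinearOrder σ]
    [WellFoundedGT σ] [CommRing R] [LinearOrder R] [IsStrictOrderedRing R] {ι : Type*}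
    {s : Finset ι} (q : ι → MvPolynomial σ R) {i : ι} (hi : i ∈ s) :
    (q i ^ 2).totalDegree ≤ (∑ j ∈ s, q j ^ 2).totalDegree := by
  classical
  exact degLex_totalDegree_monotone (MonomialOrder.degLex.degree_sq_le_degree_sum_sq q hi)

namespace IsPseudoExpectation

variable {n k : ℕ} {L : MvPolynomial (Fin n) ℝ → ℝ}

theorem map_sum (hL : IsPseudoExpectation n k L) {ι : Type*} (s : Finset ι)
    (f : ι → MvPolynomial (Fin n) ℝ) : L (∑ i ∈ s, f i) = ∑ i ∈ s, L (f i) :=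
  _root_.map_sum (⟨⟨L, hL.1⟩, hL.2.1⟩ : MvPolynomial (Fin n) ℝ →ₗ[ℝ] ℝ) f s

theorem map_mul_sq_nonneg_of_isSOS (hL : IsPseudoExpectation n k L) {W : MvPolynomial (Fin n) ℝ}
    (hW : IsSOS W) {P : MvPolynomial (Fin n) ℝ} (hdeg : W.totalDegree + (P ^ 2).totalDegree ≤ k) :
    0 ≤ L (W * P ^ 2) := by
  obtain ⟨r, q, rfl⟩ := hW
  rw [Finset.sum_mul, hL.map_sum]
  refine Finset.sum_nonneg fun i hi => ?_
  rw [← mul_pow]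
  refine hL.2.2.2 _ ?_
  calc ((q i * P) ^ 2).totalDegree = (q i ^ 2 * P ^ 2).totalDegree := by rw [mul_pow]
    _ ≤ (q i ^ 2).totalDegree + (P ^ 2).totalDegree := totalDegree_mul _ _
    _ ≤ (∑ j, q j ^ 2).totalDegree + (P ^ 2).totalDegree := by
      gcongr
      exact totalDegree_sq_le_totalDegree_sum_sq q hi
    _ ≤ k := hdeg

end IsPseudoExpectation

/-- Reweighing: if `L` is a degree-`k` pseudoexpectation and `W` is a sum-of-squares
polynomial of degree `d < k` with `L W > 0`, then `P ↦ L (W·P) / L W` is a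
degree-`(k-d)` pseudoexpectation. -/
theorem stmt9 (n k d : ℕ) (L : MvPolynomial (Fin n) ℝ → ℝ)
    (hL : IsPseudoExpectation n k L)
    (W : MvPolynomial (Fin n) ℝ) (hW : IsSOS W) (hWdeg : W.totalDegree ≤ d)
    (hdk : d < k) (hLW : 0 < L W) :
    IsPseudoExpectation n (k - d) (fun P => L (W * P) / L W) := by
  refine ⟨fun P Q => ?_, fun c P => ?_, ?_, fun P hP => ?_⟩ <;> dsimp only
  · rw [mul_add, hL.1, add_div]
  · rw [mul_smul_comm, hL.2.1, mul_div_assoc]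
  · rw [mul_one, div_self hLW.ne']
  · exact div_nonneg (hL.map_mul_sq_nonneg_of_isSOS hW (by omega)) hLW.le
end

section
/- Let A and B be real random variables on a probability space such that 0 ≤ A ≤ B almost surely, B² is integrable, and E B > 0. Suppose E A ≤ ε·E B and E B² ≤ t·(E B)² for some ε > 0 and t > 0. Then for every δ with 0 ≤ δ ≤ 1, the probability of the event {A ≤ e^δ·ε·B} is at least δ²/(9t). -/
/-!
Let `S = {A ≤ e^δ ε B}`. On the complement `e^δ ε B < A`, so `e^δ ε ∫_{Sᶜ} B ≤ E A ≤ ε E B`,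
i.e. `S` carries at least the fraction `1 - e^{-δ} ≥ δ/3` of the mass of `B`. Cauchy–Schwarz on `S`
gives `(∫_S B)² ≤ P(S) E B² ≤ P(S) t (E B)²`, hence `P(S) ≥ δ²/(9t)`.
-/

open MeasureTheory

namespace MeasureTheory

variable {α : Type*} [MeasurableSpace α]

theorem sq_integral_le_measureReal_univ_mul_integral_sq {ν : Measure α} [IsFiniteMeasure ν]
    {f : α → ℝ} (hf : MemLp f 2 ν) :
    (∫ x, f x ∂ν) ^ 2 ≤ ν.real Set.univ * ∫ x, f x ^ 2 ∂ν := by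
  have h2 : ENNReal.ofReal 2 = 2 := by norm_num
  have holder := integral_mul_le_Lp_mul_Lq_of_nonneg Real.HolderConjugate.two_two
    (ae_of_all _ fun _ => zero_le_one) (ae_of_all _ fun x => abs_nonneg (f x))
    (h2 ▸ memLp_const (1 : ℝ)) (h2 ▸ hf.norm)
  simp only [one_mul, one_pow, mul_one, integral_const, smul_eq_mul, Real.rpow_two, sq_abs,
    ← Real.sqrt_eq_rpow] at holder
  calc (∫ x, f x ∂ν) ^ 2 = |∫ x, f x ∂ν| ^ 2 := (sq_abs _).symm
    _ ≤ (∫ x, |f x| ∂ν) ^ 2 := pow_le_pow_left₀ (abs_nonneg _) abs_integral_le_integral_abs 2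
    _ ≤ (√(ν.real Set.univ) * √(∫ x, f x ^ 2 ∂ν)) ^ 2 :=
        pow_le_pow_left₀ (integral_nonneg fun x => abs_nonneg _) holder 2
    _ = ν.real Set.univ * ∫ x, f x ^ 2 ∂ν := by
        rw [mul_pow, Real.sq_sqrt measureReal_nonneg,
          Real.sq_sqrt (integral_nonneg fun x => sq_nonneg _)]

theorem sq_setIntegral_le_measureReal_mul_integral_sq {μ : Measure α} [IsFiniteMeasure μ]
    {f : α → ℝ} (hf : MemLp f 2 μ) (s : Set α) :
    (∫ x in s, f x ∂μ) ^ 2 ≤ μ.real s * ∫ x, f x ^ 2 ∂μ := by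
  calc (∫ x in s, f x ∂μ) ^ 2 ≤ μ.real s * ∫ x in s, f x ^ 2 ∂μ := by
        simpa only [measureReal_restrict_apply_univ] using
          sq_integral_le_measureReal_univ_mul_integral_sq (hf.restrict s)
    _ ≤ μ.real s * ∫ x, f x ^ 2 ∂μ :=
        mul_le_mul_of_nonneg_left (setIntegral_le_integral hf.integrable_sq
          (ae_of_all _ fun x => sq_nonneg _)) measureReal_nonneg

theorem mul_setIntegral_le_integral_of_mul_le {μ : Measure α} {f g : α → ℝ} {s : Set α} {c : ℝ}
    (hf : Integrable f μ) (hg : Integrable g μ) (hg0 : 0 ≤ᵐ[μ] g)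
    (hfg : ∀ᵐ x ∂μ.restrict s, c * f x ≤ g x) :
    c * ∫ x in s, f x ∂μ ≤ ∫ x, g x ∂μ :=
  calc c * ∫ x in s, f x ∂μ = ∫ x in s, c * f x ∂μ := (integral_const_mul c _).symm
    _ ≤ ∫ x in s, g x ∂μ := setIntegral_mono_ae_restrict (hf.const_mul c).integrableOn
        hg.integrableOn hfg
    _ ≤ ∫ x, g x ∂μ := setIntegral_le_integral hg hg0

end MeasureTheory

theorem Real.div_one_add_le_one_sub_exp_neg {x : ℝ} (hx : -1 < x) :
    x / (1 + x) ≤ 1 - Real.exp (-x) := by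
  have hpos : 0 < 1 + x := by linarith
  have : Real.exp (-x) ≤ 1 / (1 + x) := by
    rw [Real.exp_neg, inv_eq_one_div]
    exact one_div_le_one_div_of_le hpos (by linarith [Real.add_one_le_exp x])
  calc x / (1 + x) = 1 - 1 / (1 + x) := by field_simp; ring
    _ ≤ 1 - Real.exp (-x) := by linarith

/-- Second-moment lemma: if `0 ≤ A ≤ B` a.s., `E A ≤ ε E B`, and `E B² ≤ t (E B)²`, then
for `0 ≤ δ ≤ 1`, `Pr[A ≤ e^δ ε B] ≥ δ²/(9t)`. -/
theorem stmt10 {Ω : Type*} [MeasurableSpace Ω] (μ : Measure Ω) [IsProbabilityMeasure μ]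
    (A B : Ω → ℝ)
    (hAB : ∀ᵐ ω ∂μ, 0 ≤ A ω ∧ A ω ≤ B ω)
    (hA : Integrable A μ) (hB : Integrable B μ)
    (hB2 : Integrable (fun ω => B ω ^ 2) μ)
    (hEB : 0 < ∫ ω, B ω ∂μ)
    (ε t : ℝ) (hε : 0 < ε) (ht : 0 < t)
    (hEA : ∫ ω, A ω ∂μ ≤ ε * ∫ ω, B ω ∂μ)
    (hEB2 : ∫ ω, B ω ^ 2 ∂μ ≤ t * (∫ ω, B ω ∂μ) ^ 2)
    (δ : ℝ) (hδ0 : 0 ≤ δ) (hδ1 : δ ≤ 1) :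
    δ ^ 2 / (9 * t) ≤ (μ {ω | A ω ≤ Real.exp δ * ε * B ω}).toReal := by
  set S := {ω | A ω ≤ Real.exp δ * ε * B ω}
  set E := ∫ ω, B ω ∂μ
  have hS : NullMeasurableSet S μ :=
    nullMeasurableSet_le hA.aemeasurable (hB.aemeasurable.const_mul _)
  have htail : ∫ ω in Sᶜ, B ω ∂μ ≤ Real.exp (-δ) * E := by
    rw [Real.exp_neg, inv_mul_eq_div, le_div_iff₀ (Real.exp_pos δ)]
    have := (mul_setIntegral_le_integral_of_mul_le hB hA (hAB.mono fun _ h => h.1)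
      ((ae_restrict_mem₀ hS.compl).mono fun ω (h : ¬ A ω ≤ _) => (not_le.mp h).le)).trans hEA
    exact (mul_le_mul_iff_right₀ hε).mp (by linarith)
  have hbulk : δ / 3 * E ≤ ∫ ω in S, B ω ∂μ := by
    have hδ : δ / 3 ≤ 1 - Real.exp (-δ) :=
      (div_le_div_of_nonneg_left hδ0 (by linarith) (by linarith)).trans
        (Real.div_one_add_le_one_sub_exp_neg (by linarith))
    linarith [integral_add_compl₀ hS hB, mul_le_mul_of_nonneg_right hδ hEB.le]
  have hCS := sq_setIntegral_le_measureReal_mul_integral_sq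
    ((memLp_two_iff_integrable_sq hB.1).2 hB2) S
  have hmass : δ ^ 2 / 9 * E ^ 2 ≤ μ.real S * t * E ^ 2 :=
    calc δ ^ 2 / 9 * E ^ 2 = (δ / 3 * E) ^ 2 := by ring
      _ ≤ (∫ ω in S, B ω ∂μ) ^ 2 := pow_le_pow_left₀ (by positivity) hbulk 2
      _ ≤ μ.real S * (t * E ^ 2) := hCS.trans (mul_le_mul_of_nonneg_left hEB2 measureReal_nonneg)
      _ = μ.real S * t * E ^ 2 := by ring
  rw [← measureReal_def, div_le_iff₀ (by positivity)]
  linarith [le_of_mul_le_mul_right hmass (by positivity)]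
end

section
/- For every even integer k ≥ 2, every real M ≥ 1, and every α ∈ ℝ, the following inequality holds: α²·(α² + 1/M)^{k/2} + (1 − 1/M)^{k/2} − (1 − 2/M)·(α² + 1/M)^{k/2} ≥ 0. (Consequently the univariate polynomial p(α) on the left-hand side, being nonnegative on ℝ, is a sum of squares of polynomials.) -/
/-!
With `a = 1/M`, `c = 1 - 1/M` and `t = X² + a`, the polynomial equals `t^(n+1) - c tⁿ + cⁿ`
(`n = k/2`), and the geometric-sum identity
`u^(n+1) - v uⁿ + vⁿ = (u - v)² ∑_{j<n} u^j v^(n-1-j) + vⁿ u + vⁿ (1 - v)`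
writes it as a sum of products of sums of squares, because `t` is a sum of squares and
`0 ≤ c ≤ 1`. Nonnegativity on `ℝ` follows by evaluation.
-/

open Polynomial

theorem IsSumSq.pow_s11 {R : Type*} [CommSemiring R] {s : R} (hs : IsSumSq s) (n : ℕ) :
    IsSumSq (s ^ n) := by
  simpa using pow_mem (Subsemiring.mem_sumSq.mpr hs) n

theorem IsSumSq.map {R S : Type*} [NonAssocSemiring R] [NonAssocSemiring S] (f : R →+* S)
    {s : R} (hs : IsSumSq s) : IsSumSq (f s) := by
  induction hs with
  | zero => simp
  | sq_add a _ ih => simpa only [map_add, map_mul] using ih.sq_add (f a)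

theorem IsSumSq.exists_fin_sum_sq {R : Type*} [CommSemiring R] {s : R} (hs : IsSumSq s) :
    ∃ (r : ℕ) (q : Fin r → R), s = ∑ i, q i ^ 2 := by
  induction hs with
  | zero => exact ⟨0, ![], by simp⟩
  | sq_add a _ ih =>
      obtain ⟨r, q, rfl⟩ := ih
      exact ⟨r + 1, Fin.cons a q, by simp [Fin.sum_univ_succ, sq]⟩

theorem Real.isSumSq_of_nonneg {c : ℝ} (hc : 0 ≤ c) : IsSumSq c :=
  IsSquare.isSumSq ⟨√c, (Real.mul_self_sqrt hc).symm⟩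

theorem pow_succ_sub_mul_pow_add_pow_eq {R : Type*} [CommRing R] (u v : R) (n : ℕ) :
    u ^ (n + 1) - v * u ^ n + v ^ n
      = (u - v) ^ 2 * ∑ j ∈ Finset.range n, u ^ j * v ^ (n - 1 - j)
        + v ^ n * u + v ^ n * (1 - v) := by
  linear_combination (v - u) * geom_sum₂_mul u v n

theorem IsSumSq.pow_succ_sub_mul_pow_add_pow {R : Type*} [CommRing R] {u v : R}
    (hu : IsSumSq u) (hv : IsSumSq v) (hv' : IsSumSq (1 - v)) (n : ℕ) :
    IsSumSq (u ^ (n + 1) - v * u ^ n + v ^ n) := by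
  have hgeom : IsSumSq (∑ j ∈ Finset.range n, u ^ j * v ^ (n - 1 - j)) :=
    IsSumSq.sum fun j _ => (hu.pow_s11 j).mul (hv.pow_s11 _)
  rw [pow_succ_sub_mul_pow_add_pow_eq]
  exact ((((IsSquare.sq (u - v)).isSumSq.mul hgeom).add ((hv.pow_s11 n).mul hu)).add
    ((hv.pow_s11 n).mul hv'))

theorem stmt11_general (k : ℕ) (M : ℝ) (hM : 1 ≤ M) :
    (∀ α : ℝ, 0 ≤ α ^ 2 * (α ^ 2 + 1 / M) ^ (k / 2) + (1 - 1 / M) ^ (k / 2)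
        - (1 - 2 / M) * (α ^ 2 + 1 / M) ^ (k / 2)) ∧
    ∃ (r : ℕ) (q : Fin r → Polynomial ℝ),
      Polynomial.X ^ 2 * (Polynomial.X ^ 2 + Polynomial.C (1 / M)) ^ (k / 2)
          + Polynomial.C ((1 - 1 / M) ^ (k / 2))
          - Polynomial.C (1 - 2 / M) * (Polynomial.X ^ 2 + Polynomial.C (1 / M)) ^ (k / 2)
        = ∑ i, q i ^ 2 := by
  set n := k / 2
  have ha : 0 ≤ 1 / M := by positivity
  have hc : 0 ≤ 1 - 1 / M := sub_nonneg.mpr ((div_le_one (by linarith)).mpr hM)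
  have ht : IsSumSq (X ^ 2 + C (1 / M) : ℝ[X]) :=
    (IsSquare.sq X).isSumSq.add ((Real.isSumSq_of_nonneg ha).map C)
  have hsos : IsSumSq (X ^ 2 * (X ^ 2 + C (1 / M)) ^ n + C ((1 - 1 / M) ^ n)
      - C (1 - 2 / M) * (X ^ 2 + C (1 / M)) ^ n) := by
    have key := ht.pow_succ_sub_mul_pow_add_pow ((Real.isSumSq_of_nonneg hc).map C)
      (by simpa using (Real.isSumSq_of_nonneg ha).map C) n
    rw [show (1 : ℝ) - 2 / M = (1 - 1 / M) - 1 / M by ring, map_sub, C_pow]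
    exact (congrArg IsSumSq (by ring)).mpr key
  refine ⟨fun α => ?_, hsos.exists_fin_sum_sq⟩
  simpa using (hsos.map (evalRingHom α)).nonneg

/-- For even `k ≥ 2`, `M ≥ 1` and all real `α`,
`α²(α² + 1/M)^{k/2} + (1 - 1/M)^{k/2} - (1 - 2/M)(α² + 1/M)^{k/2} ≥ 0`; consequently
the corresponding univariate polynomial is a sum of squares. -/
theorem stmt11 (k : ℕ) (hk : 2 ≤ k) (hke : Even k) (M : ℝ) (hM : 1 ≤ M) :
    (∀ α : ℝ, 0 ≤ α ^ 2 * (α ^ 2 + 1 / M) ^ (k / 2) + (1 - 1 / M) ^ (k / 2)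
        - (1 - 2 / M) * (α ^ 2 + 1 / M) ^ (k / 2)) ∧
    ∃ (r : ℕ) (q : Fin r → Polynomial ℝ),
      Polynomial.X ^ 2 * (Polynomial.X ^ 2 + Polynomial.C (1 / M)) ^ (k / 2)
          + Polynomial.C ((1 - 1 / M) ^ (k / 2))
          - Polynomial.C (1 - 2 / M) * (Polynomial.X ^ 2 + Polynomial.C (1 / M)) ^ (k / 2)
        = ∑ i, q i ^ 2 :=
  stmt11_general k M hM
end
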